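/- arXiv:1301.0621 — 3 statements merged into one kernel-verified Lean document; each statement's English description precedes it below -/
import Mathlib

section
/- The vector fields L0 = ∂_z − (w_z/w_x)∂_x + λa∂_z and L1 = ∂_y − (w_y/w_x)∂_x + λb∂_y on an open set of ℝ³ commute for all values of the parameter λ if and only if w satisfies the dispersionless Hirota equation (b−a)w_x w_{yz} + a w_y w_{zx} − b w_z w_{xy} = 0. -/
noncomputable section

abbrev Pt3 := Fin 3 → ℝ

/-- Partial derivative in the `j`-th coordinate direction. -/
def pd (j : Fin 3) (f : Pt3 → ℝ) (p : Pt3) : ℝ :=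
  fderiv ℝ f p (Pi.single j 1)

/-- Lie bracket of vector fields on ℝ³. -/
def lieB (X Y : Pt3 → Pt3) (p : Pt3) : Pt3 :=
  fun i => ∑ j, (X p j * pd j (fun q => Y q i) p - Y p j * pd j (fun q => X q i) p)

/-- L0 = ∂_z − (w_z/w_x)∂_x + λ a ∂_z, coordinates (x,y,z)=(0,1,2). -/
def L0 (w : Pt3 → ℝ) (a lam : ℝ) (p : Pt3) : Pt3 :=
  ![-(pd 2 w p / pd 0 w p), 0, 1 + lam * a]

/-- L1 = ∂_y − (w_y/w_x)∂_x + λ b ∂_y. -/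
def L1 (w : Pt3 → ℝ) (b lam : ℝ) (p : Pt3) : Pt3 :=
  ![-(pd 1 w p / pd 0 w p), 1 + lam * b, 0]

/-- The dispersionless Hirota expression (b−a)w_x w_{yz} + a w_y w_{zx} − b w_z w_{xy}. -/
def hirota (a b : ℝ) (w : Pt3 → ℝ) (p : Pt3) : ℝ :=
  (b - a) * pd 0 w p * pd 1 (fun q => pd 2 w q) p
    + a * pd 1 w p * pd 2 (fun q => pd 0 w q) p
    - b * pd 2 w p * pd 0 (fun q => pd 1 w q) p

section Helpers

variable {f g w : Pt3 → ℝ} {p : Pt3} {j : Fin 3}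

lemma pd_const (c : ℝ) : pd j (fun _ => c) p = 0 := by simp [pd]

lemma pd_neg : pd j (fun q => -f q) p = -pd j f p := by simp [pd, fderiv_neg]

lemma hasDerivAt_line (hf : DifferentiableAt ℝ f p) (v : Pt3) :
    HasDerivAt (fun t : ℝ => f (p + t • v)) (fderiv ℝ f p v) 0 := by
  have hc : HasDerivAt (fun t : ℝ => p + t • v) v 0 := by
    simpa using ((hasDerivAt_id (0:ℝ)).smul_const v).const_add p
  have h := HasFDerivAt.comp_hasDerivAt (0:ℝ) (by simpa using hf.hasFDerivAt) hc
  exact h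

lemma pd_unique (hf : DifferentiableAt ℝ f p) {m : ℝ}
    (h : HasDerivAt (fun t : ℝ => f (p + t • (Pi.single j 1 : Pt3))) m 0) :
    pd j f p = m := (hasDerivAt_line hf _).unique h

lemma pd_div (hf : DifferentiableAt ℝ f p) (hg : DifferentiableAt ℝ g p) (h0 : g p ≠ 0) :
    pd j (fun q => f q / g q) p
      = (pd j f p * g p - f p * pd j g p) / (g p) ^ 2 := by
  have hdiv : DifferentiableAt ℝ (fun q => f q / g q) p := by
    simp only [div_eq_mul_inv]; exact hf.mul (hg.inv h0)
  apply pd_unique hdiv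
  have h := (hasDerivAt_line hf ((Pi.single j 1 : Pt3))).div
    (hasDerivAt_line hg ((Pi.single j 1 : Pt3))) (by simpa using h0)
  simpa [pd, Pi.div_def] using h

lemma contDiff_pd (hw : ContDiff ℝ (⊤ : ℕ∞) w) (i : Fin 3) : ContDiff ℝ (⊤ : ℕ∞) (pd i w) :=
  (hw.fderiv_right (by simp)).clm_apply contDiff_const

lemma pd_symm (hw : ContDiff ℝ (⊤ : ℕ∞) w) (i j : Fin 3) (p : Pt3) :
    pd i (pd j w) p = pd j (pd i w) p := by
  have hd : ∀ y, HasFDerivAt w (fderiv ℝ w y) y := fun y =>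
    (hw.differentiable (by simp) y).hasFDerivAt
  have hd2 : DifferentiableAt ℝ (fderiv ℝ w) p :=
    ((hw.fderiv_right (m := (⊤ : ℕ∞)) (by simp)).differentiable (by simp)) p
  have hsymm := second_derivative_symmetric hd hd2.hasFDerivAt
    (Pi.single i 1) (Pi.single j 1)
  have key : ∀ a b : Fin 3, pd a (pd b w) p
      = fderiv ℝ (fderiv ℝ w) p (Pi.single a 1) (Pi.single b 1) := by
    intro a b
    rw [show pd a (pd b w) p = fderiv ℝ (fun q => (fderiv ℝ w q) (Pi.single b 1)) p
        (Pi.single a 1) from rfl]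
    rw [fderiv_clm_apply hd2 (differentiableAt_const _)]
    simp
  rw [key, key, hsymm]

lemma lieB0 (hw : ContDiff ℝ (⊤ : ℕ∞) w) (a b lam : ℝ) (h0 : pd 0 w p ≠ 0) :
    lieB (L0 w a lam) (L1 w b lam) p 0 = lam * hirota a b w p / (pd 0 w p) ^ 2 := by
  have hW : ∀ i : Fin 3, DifferentiableAt ℝ (pd i w) p := fun i =>
    ((contDiff_pd hw i).differentiable (by simp)) p
  have eY : (fun q => L1 w b lam q 0) = fun q => -(pd 1 w q / pd 0 w q) := by
    funext q; simp [L1]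
  have eX : (fun q => L0 w a lam q 0) = fun q => -(pd 2 w q / pd 0 w q) := by
    funext q; simp [L0]
  have h21 : pd 2 (pd 1 w) p = pd 1 (pd 2 w) p := pd_symm hw 2 1 p
  have h10 : pd 1 (pd 0 w) p = pd 0 (pd 1 w) p := pd_symm hw 1 0 p
  have h20 : pd 2 (pd 0 w) p = pd 0 (pd 2 w) p := pd_symm hw 2 0 p
  simp only [lieB, Fin.sum_univ_three, eY, eX, pd_neg,
    pd_div (hW 1) (hW 0) h0, pd_div (hW 2) (hW 0) h0,
    L0, L1, Matrix.cons_val_zero, Matrix.cons_val_one, Matrix.head_cons,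
    Matrix.cons_val_two, Matrix.tail_cons, hirota]
  rw [h21, h10, h20]
  field_simp
  ring

lemma lieB12 (a b lam : ℝ) (i : Fin 3) (hi : i ≠ 0) :
    lieB (L0 w a lam) (L1 w b lam) p i = 0 := by
  fin_cases i
  · exact absurd rfl hi
  · have eY : (fun q => L1 w b lam q 1) = fun _ => 1 + lam * b := by funext q; simp [L1]
    have eX : (fun q => L0 w a lam q 1) = fun _ => (0:ℝ) := by funext q; simp [L0]
    simp [lieB, Fin.sum_univ_three, eY, eX, pd_const]
  · have eY : (fun q => L1 w b lam q 2) = fun _ => (0:ℝ) := by funext q; simp [L1]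
    have eX : (fun q => L0 w a lam q 2) = fun _ => 1 + lam * a := by funext q; simp [L0]
    simp [lieB, Fin.sum_univ_three, eY, eX, pd_const]

end Helpers

theorem stmt0 (w : Pt3 → ℝ) (a b : ℝ) (ha : a ≠ 0) (hb : b ≠ 0) (hab : a ≠ b)
    (B : Set Pt3) (hB : IsOpen B) (hw : ContDiff ℝ (⊤ : ℕ∞) w)
    (hwx : ∀ p ∈ B, pd 0 w p ≠ 0) :
    (∀ lam : ℝ, ∀ p ∈ B, lieB (L0 w a lam) (L1 w b lam) p = 0) ↔
      (∀ p ∈ B, hirota a b w p = 0) := by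
  constructor
  · intro h p hp
    have h0 := hwx p hp
    have := congrFun (h 1 p hp) 0
    rw [lieB0 hw a b 1 h0] at this
    simp only [Pi.zero_apply, one_mul] at this
    have h2 : (pd 0 w p) ^ 2 ≠ 0 := pow_ne_zero _ h0
    field_simp at this
    simpa using this
  · intro h lam p hp
    have h0 := hwx p hp
    funext i
    by_cases hi : i = 0
    · subst hi
      rw [lieB0 hw a b lam h0, h p hp]
      simp
    · rw [lieB12 a b lam i hi]
      simp
end
end

section
/- The vector fields L0 = ∂_Y − λ∂_T and L1 = ∂_X − λ(∂_Y + εX∂_X) commute for every λ ∈ ℝ. -/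
noncomputable section

lemma pd_lin (j : Fin 3) (a b : ℝ) (p : Pt3) :
    fderiv ℝ (fun q : Pt3 => a - b * q 0) p (Pi.single j 1) = -(b * (Pi.single j 1 : Pt3) 0) := by
  have h : HasFDerivAt (fun q : Pt3 => a - b * q 0)
      ((0 : Pt3 →L[ℝ] ℝ) - b • (ContinuousLinearMap.proj 0 : Pt3 →L[ℝ] ℝ)) p := by
    exact (hasFDerivAt_const a p).sub ((ContinuousLinearMap.proj (R := ℝ) (φ := fun _ : Fin 3 => ℝ) 0).hasFDerivAt.const_smul b)
  rw [h.fderiv]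
  simp [smul_eq_mul]

/-- Coordinates (X,Y,T) = (0,1,2). L0 = ∂_Y − λ∂_T, L1 = ∂_X − λ(∂_Y + εX∂_X). -/
theorem stmt12 (ε : ℝ) :
    ∀ lam : ℝ, ∀ p : Pt3,
      lieB (fun _ => ![0, 1, -lam]) (fun q => ![1 - lam * ε * q 0, -lam, 0]) p = 0 := by
  intro lam p
  funext i
  fin_cases i <;>
    simp [lieB, pd_lin, Fin.sum_univ_three, pd, Pi.single_apply]
end
end

section
/- The function ψ = (1 − ελ₄X)e^{−ε(T/λ₄ + Y)} is annihilated by both L0 = ∂_Y − λ₄∂_T and L1 = ∂_X − λ₄(∂_Y + εX∂_X). -/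
noncomputable section

open ContinuousLinearMap

theorem fderiv_one_sub_mul_exp_neg_apply {E : Type*} [NormedAddCommGroup E] [NormedSpace ℝ E]
    (u v : E →L[ℝ] ℝ) (x w : E) :
    fderiv ℝ (fun y => (1 - u y) * Real.exp (-v y)) x w
      = -(u w + (1 - u x) * v w) * Real.exp (-v x) := by
  have hu : HasFDerivAt (fun y => 1 - u y) (-u) x := by
    simpa using (u.hasFDerivAt (x := x)).const_sub 1
  have hv : HasFDerivAt (fun y => Real.exp (-v y)) (Real.exp (-v x) • -v) x :=
    (v.hasFDerivAt (x := x)).neg.exp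
  have h : HasFDerivAt (fun y => (1 - u y) * Real.exp (-v y))
      ((1 - u x) • (Real.exp (-v x) • -v) + Real.exp (-v x) • -u) x := hu.mul hv
  rw [h.fderiv]
  simp only [add_apply, smul_apply, neg_apply, smul_eq_mul]
  ring

theorem pd_one_sub_mul_exp_neg (u v : Pt3 →L[ℝ] ℝ) (j : Fin 3) (p : Pt3) :
    pd j (fun y => (1 - u y) * Real.exp (-v y)) p
      = -(u (Pi.single j 1) + (1 - u p) * v (Pi.single j 1)) * Real.exp (-v p) :=
  fderiv_one_sub_mul_exp_neg_apply u v p _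

theorem twistor_eq_one_sub_mul_exp_neg (ε lam4 : ℝ) :
    (fun r : Pt3 => (1 - ε * lam4 * r 0) * Real.exp (-(ε * (r 2 / lam4 + r 1))))
      = fun r => (1 - ((ε * lam4) • proj 0 : Pt3 →L[ℝ] ℝ) r)
          * Real.exp (-(ε • (lam4⁻¹ • proj 2 + proj 1) : Pt3 →L[ℝ] ℝ) r) := by
  funext r
  simp only [smul_apply, add_apply, proj_apply, smul_eq_mul, div_eq_inv_mul]

-- The coordinates (X, Y, T) are `r 0`, `r 1`, `r 2`.
theorem stmt14_general (ε lam4 : ℝ) (hl : lam4 ≠ 0) :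
    ∀ q : Pt3,
      pd 1 (fun r => (1 - ε * lam4 * r 0) * Real.exp (-(ε * (r 2 / lam4 + r 1)))) q
        - lam4 * pd 2 (fun r => (1 - ε * lam4 * r 0) *
            Real.exp (-(ε * (r 2 / lam4 + r 1)))) q = 0 ∧
      pd 0 (fun r => (1 - ε * lam4 * r 0) * Real.exp (-(ε * (r 2 / lam4 + r 1)))) q
        - lam4 * (pd 1 (fun r => (1 - ε * lam4 * r 0) *
              Real.exp (-(ε * (r 2 / lam4 + r 1)))) q
          + ε * q 0 * pd 0 (fun r => (1 - ε * lam4 * r 0) *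
              Real.exp (-(ε * (r 2 / lam4 + r 1)))) q) = 0 := by
  intro q
  simp only [twistor_eq_one_sub_mul_exp_neg, pd_one_sub_mul_exp_neg]
  simp only [smul_apply, add_apply, proj_apply, smul_eq_mul, Pi.single_apply, Fin.reduceEq,
    if_true, if_false]
  constructor <;> field_simp <;> ring

/-- Coordinates (X,Y,T) = (0,1,2). ψ = (1 − ελ₄X)e^{−ε(T/λ₄ + Y)} is annihilated
by L0 = ∂_Y − λ₄∂_T and L1 = ∂_X − λ₄(∂_Y + εX∂_X). -/
theorem stmt14 (ε lam4 : ℝ) (hε : ε ≠ 0) (hl : lam4 ≠ 0) :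
    ∀ q : Pt3,
      pd 1 (fun r => (1 - ε * lam4 * r 0) * Real.exp (-(ε * (r 2 / lam4 + r 1)))) q
        - lam4 * pd 2 (fun r => (1 - ε * lam4 * r 0) *
            Real.exp (-(ε * (r 2 / lam4 + r 1)))) q = 0 ∧
      pd 0 (fun r => (1 - ε * lam4 * r 0) * Real.exp (-(ε * (r 2 / lam4 + r 1)))) q
        - lam4 * (pd 1 (fun r => (1 - ε * lam4 * r 0) *
              Real.exp (-(ε * (r 2 / lam4 + r 1)))) q
          + ε * q 0 * pd 0 (fun r => (1 - ε * lam4 * r 0) *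
              Real.exp (-(ε * (r 2 / lam4 + r 1)))) q) = 0 :=
  stmt14_general ε lam4 hl
end
end
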